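/- arXiv:1401.2566 — 2 statements merged into one kernel-verified Lean document; each statement's English description precedes it below -/
import Mathlib

section
/- Let A be a commutative associative unital algebra and let D, F: A → A be two commuting generalized derivations. Then the bracket [a,b] = D(a)F(b) - F(a)D(b) defines a Lie algebra structure on the underlying vector space of A (i.e., it is bilinear, antisymmetric, and satisfies the Jacobi identity). -/
/-- A generalized derivation of a commutative associative unital algebra `A`. -/
def IsGenDer {K A : Type*} [Field K] [CommRing A] [Algebra K A] (D : A →ₗ[K] A) : Prop :=
  ∀ a b : A, D (a * b) = D a * b + a * D b - a * b * D 1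

/-- The Poisson-type bracket `[a,b] = D(a)F(b) - F(a)D(b)`. -/
def pbr {K A : Type*} [Field K] [CommRing A] [Algebra K A]
    (D F : A →ₗ[K] A) (a b : A) : A :=
  D a * F b - F a * D b

/-!
A generalized derivation `G` acts on a bracket by a Leibniz rule with a correction term,
`G [a,b] = [a,b]_{G∘D,F} + [a,b]_{D,G∘F} - [a,b] G(1)`.
Applying this with `G = D` and `G = F` turns the cyclic sum into a polynomial expression in the
values of `D`, `F`, `D∘D`, `D∘F`, `F∘D`, `F∘F` at `a, b, c` and in `D 1`, `F 1`; once `D∘F = F∘D`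
is used, the terms cancel in the commutative ring `A`.
-/

section

variable {K A : Type*} [Field K] [CommRing A] [Algebra K A]

theorem pbr_add_left (D F : A →ₗ[K] A) (a b c : A) :
    pbr D F (a + b) c = pbr D F a c + pbr D F b c := by
  simp only [pbr, map_add]
  ring

theorem pbr_add_right (D F : A →ₗ[K] A) (a b c : A) :
    pbr D F a (b + c) = pbr D F a b + pbr D F a c := by
  simp only [pbr, map_add]
  ring

theorem pbr_smul_left (D F : A →ₗ[K] A) (t : K) (a b : A) :
    pbr D F (t • a) b = t • pbr D F a b := by
  simp only [pbr, map_smul, smul_mul_assoc, smul_sub]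

theorem pbr_smul_right (D F : A →ₗ[K] A) (t : K) (a b : A) :
    pbr D F a (t • b) = t • pbr D F a b := by
  simp only [pbr, map_smul, mul_smul_comm, smul_sub]

theorem pbr_self (D F : A →ₗ[K] A) (a : A) : pbr D F a a = 0 := by
  rw [pbr, mul_comm, sub_self]

theorem IsGenDer.map_pbr {G : A →ₗ[K] A} (hG : IsGenDer G) (D F : A →ₗ[K] A) (a b : A) :
    G (pbr D F a b) = pbr (G ∘ₗ D) F a b + pbr D (G ∘ₗ F) a b - pbr D F a b * G 1 := by
  simp only [pbr, map_sub, LinearMap.comp_apply]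
  rw [hG, hG]
  ring

theorem pbr_jacobi {D F : A →ₗ[K] A} (hD : IsGenDer D) (hF : IsGenDer F)
    (hcomm : D ∘ₗ F = F ∘ₗ D) (a b c : A) :
    pbr D F (pbr D F a b) c + pbr D F (pbr D F b c) a + pbr D F (pbr D F c a) b = 0 := by
  have hDF (x : A) : D (F x) = F (D x) := LinearMap.congr_fun hcomm x
  have outer (x y z : A) :
      pbr D F (pbr D F x y) z = D (pbr D F x y) * F z - F (pbr D F x y) * D z := rfl
  simp only [outer, hD.map_pbr, hF.map_pbr]
  simp only [pbr, LinearMap.comp_apply, hDF]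
  ring

end

/-- For commuting generalized derivations `D`, `F`, the bracket
`[a,b] = D(a)F(b) - F(a)D(b)` defines a Lie algebra structure on `A`:
it is bilinear, alternating, and satisfies the Jacobi identity. -/
theorem poisson_bracket_is_lie {K A : Type*} [Field K] [CommRing A] [Algebra K A]
    (D F : A →ₗ[K] A) (hD : IsGenDer D) (hF : IsGenDer F)
    (hcomm : D ∘ₗ F = F ∘ₗ D) :
    (∀ a b c : A, pbr D F (a + b) c = pbr D F a c + pbr D F b c) ∧
    (∀ (t : K) (a b : A), pbr D F (t • a) b = t • pbr D F a b) ∧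
    (∀ a b c : A, pbr D F a (b + c) = pbr D F a b + pbr D F a c) ∧
    (∀ (t : K) (a b : A), pbr D F a (t • b) = t • pbr D F a b) ∧
    (∀ a : A, pbr D F a a = 0) ∧
    (∀ a b c : A,
      pbr D F (pbr D F a b) c + pbr D F (pbr D F b c) a + pbr D F (pbr D F c a) b = 0) :=
  ⟨pbr_add_left D F, pbr_smul_left D F, pbr_add_right D F, pbr_smul_right D F, pbr_self D F,
    pbr_jacobi hD hF hcomm⟩
end

section
/- Let P be the Lie algebra on the divided powers algebra O_2(2,1) over a field of characteristic 5 with bracket [a,b] = ∂_x(a)∂_y(b) - ∂_y(a)∂_x(b). Then the center of P is the one-dimensional span of the unit element 1. -/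
/-!
Bracketing with the generators gives `[a, x] = -∂_y a` and `[a, y] = ∂_x a`, so a central
element is killed by both lowering derivations; their common kernel consists of the
functions supported on the index `(0, 0)`, i.e. `K · 1`.
-/

open scoped BigOperators

/-- Multiplication of the divided powers algebra `O₂(2,1)` in characteristic 5,
realized on coefficient functions with respect to the basis
`x^(i) y^(j)`, `0 ≤ i < 25`, `0 ≤ j < 5`. -/
def dpMul2 {K : Type*} [Field K] (f g : Fin 25 × Fin 5 → K) : Fin 25 × Fin 5 → K :=
  fun k => ∑ i : Fin 25 × Fin 5, ∑ j : Fin 25 × Fin 5,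
    if (i.1 : ℕ) + (j.1 : ℕ) = (k.1 : ℕ) ∧ (i.2 : ℕ) + (j.2 : ℕ) = (k.2 : ℕ) then
      ((((i.1 : ℕ) + (j.1 : ℕ)).choose i.1 : K) * (((i.2 : ℕ) + (j.2 : ℕ)).choose i.2 : K))
        * f i * g j
    else 0

/-- The unit `1 = x^(0) y^(0)` of `O₂(2,1)`. -/
def dpOne2 {K : Type*} [Field K] : Fin 25 × Fin 5 → K :=
  fun k => if (k.1 : ℕ) = 0 ∧ (k.2 : ℕ) = 0 then 1 else 0

/-- The lowering derivation `∂_x` of `O₂(2,1)`. -/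
def dpDx {K : Type*} [Field K] (f : Fin 25 × Fin 5 → K) : Fin 25 × Fin 5 → K :=
  fun k => if h : (k.1 : ℕ) + 1 < 25 then f (⟨(k.1 : ℕ) + 1, h⟩, k.2) else 0

/-- The lowering derivation `∂_y` of `O₂(2,1)`. -/
def dpDy {K : Type*} [Field K] (f : Fin 25 × Fin 5 → K) : Fin 25 × Fin 5 → K :=
  fun k => if h : (k.2 : ℕ) + 1 < 5 then f (k.1, ⟨(k.2 : ℕ) + 1, h⟩) else 0

/-- The Poisson bracket `[a,b] = ∂_x(a)∂_y(b) - ∂_y(a)∂_x(b)` on `O₂(2,1)`. -/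
def pbr2 {K : Type*} [Field K] (a b : Fin 25 × Fin 5 → K) : Fin 25 × Fin 5 → K :=
  dpMul2 (dpDx a) (dpDy b) - dpMul2 (dpDy a) (dpDx b)

section DividedPowers

variable {K : Type*} [Field K]

def dpX : Fin 25 × Fin 5 → K := Pi.single (1, 0) 1

def dpY : Fin 25 × Fin 5 → K := Pi.single (0, 1) 1

lemma dpOne2_eq_single : (dpOne2 : Fin 25 × Fin 5 → K) = Pi.single (0, 0) 1 := by
  funext ⟨i, j⟩
  simp only [dpOne2, Pi.single_apply, Prod.ext_iff, Fin.ext_iff, Fin.val_zero]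

@[simp]
lemma dpMul2_zero_left (g : Fin 25 × Fin 5 → K) : dpMul2 0 g = 0 := by
  funext k; simp [dpMul2]

@[simp]
lemma dpMul2_zero_right (f : Fin 25 × Fin 5 → K) : dpMul2 f 0 = 0 := by
  funext k; simp [dpMul2]

@[simp]
lemma dpMul2_dpOne2_right (f : Fin 25 × Fin 5 → K) : dpMul2 f dpOne2 = f := by
  funext k
  simp only [dpMul2, dpOne2_eq_single, Pi.single_apply, mul_ite, mul_one, mul_zero, ite_and]
  rw [Finset.sum_eq_single k]
  · rw [Finset.sum_eq_single (0, 0)] <;> simp +contextual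
  · intro i _ hik
    refine Finset.sum_eq_zero fun j _ => ?_
    split_ifs with h1 h2 h3 <;> try rfl
    subst h3
    exact absurd (Prod.ext (Fin.ext (by simpa using h1)) (Fin.ext (by simpa using h2))) hik
  · simp

lemma dpDx_eq_zero_iff (a : Fin 25 × Fin 5 → K) :
    dpDx a = 0 ↔ ∀ k : Fin 25 × Fin 5, (k.1 : ℕ) ≠ 0 → a k = 0 := by
  constructor
  · rintro h ⟨⟨i, hi⟩, j⟩ (hi0 : i ≠ 0)
    have := congrFun h (⟨i - 1, by omega⟩, j)
    simp only [dpDx, Nat.sub_add_cancel (Nat.pos_of_ne_zero hi0), hi, dif_pos] at this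
    exact this
  · intro h
    funext k
    unfold dpDx
    split_ifs
    exacts [h _ (Nat.succ_ne_zero _), rfl]

lemma dpDy_eq_zero_iff (a : Fin 25 × Fin 5 → K) :
    dpDy a = 0 ↔ ∀ k : Fin 25 × Fin 5, (k.2 : ℕ) ≠ 0 → a k = 0 := by
  constructor
  · rintro h ⟨i, ⟨j, hj⟩⟩ (hj0 : j ≠ 0)
    have := congrFun h (i, ⟨j - 1, by omega⟩)
    simp only [dpDy, Nat.sub_add_cancel (Nat.pos_of_ne_zero hj0), hj, dif_pos] at this
    exact this
  · intro h
    funext k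
    unfold dpDy
    split_ifs
    exacts [h _ (Nat.succ_ne_zero _), rfl]

lemma dpDx_dpX : dpDx (dpX : Fin 25 × Fin 5 → K) = dpOne2 := by
  funext ⟨⟨i, hi⟩, j⟩
  simp only [dpDx, dpX, dpOne2, Pi.single_apply, Prod.ext_iff, Fin.ext_iff]
  split_ifs <;> simp_all

lemma dpDy_dpX : dpDy (dpX : Fin 25 × Fin 5 → K) = 0 :=
  (dpDy_eq_zero_iff _).2 fun k hk => Pi.single_eq_of_ne (by rintro rfl; exact hk rfl) _

lemma dpDx_dpY : dpDx (dpY : Fin 25 × Fin 5 → K) = 0 :=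
  (dpDx_eq_zero_iff _).2 fun k hk => Pi.single_eq_of_ne (by rintro rfl; exact hk rfl) _

lemma dpDy_dpY : dpDy (dpY : Fin 25 × Fin 5 → K) = dpOne2 := by
  funext ⟨i, ⟨j, hj⟩⟩
  simp only [dpDy, dpY, dpOne2, Pi.single_apply, Prod.ext_iff, Fin.ext_iff]
  split_ifs <;> simp_all

lemma pbr2_dpX (a : Fin 25 × Fin 5 → K) : pbr2 a dpX = -dpDy a := by
  simp [pbr2, dpDx_dpX, dpDy_dpX]

lemma pbr2_dpY (a : Fin 25 × Fin 5 → K) : pbr2 a dpY = dpDx a := by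
  simp [pbr2, dpDx_dpY, dpDy_dpY]

lemma forall_pbr2_eq_zero_iff (a : Fin 25 × Fin 5 → K) :
    (∀ b, pbr2 a b = 0) ↔ dpDx a = 0 ∧ dpDy a = 0 := by
  refine ⟨fun h => ⟨pbr2_dpY a ▸ h dpY, neg_eq_zero.1 (pbr2_dpX a ▸ h dpX)⟩, ?_⟩
  rintro ⟨hx, hy⟩ b
  simp [pbr2, hx, hy]

lemma dpDx_eq_zero_and_dpDy_eq_zero_iff (a : Fin 25 × Fin 5 → K) :
    dpDx a = 0 ∧ dpDy a = 0 ↔ ∃ c : K, a = c • dpOne2 := by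
  simp only [dpDx_eq_zero_iff, dpDy_eq_zero_iff, dpOne2_eq_single]
  constructor
  · rintro ⟨hx, hy⟩
    refine ⟨a (0, 0), funext fun k => ?_⟩
    by_cases hk : k = (0, 0)
    · simp [hk]
    · have : (k.1 : ℕ) ≠ 0 ∨ (k.2 : ℕ) ≠ 0 := by
        contrapose! hk
        exact Prod.ext (Fin.ext hk.1) (Fin.ext hk.2)
      rw [Pi.smul_apply, Pi.single_eq_of_ne hk, smul_zero]
      exact this.elim (hx k) (hy k)
  · rintro ⟨c, rfl⟩
    refine ⟨fun k hk => ?_, fun k hk => ?_⟩ <;>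
      simp only [Pi.smul_apply, Pi.single_eq_of_ne (show k ≠ (0, 0) by rintro rfl; exact hk rfl),
        smul_zero]

end DividedPowers

theorem poisson_center_eq_span_one_general {K : Type*} [Field K] :
    ∀ a : Fin 25 × Fin 5 → K,
      (∀ b : Fin 25 × Fin 5 → K, pbr2 a b = 0) ↔ ∃ c : K, a = c • (dpOne2 : Fin 25 × Fin 5 → K) :=
  fun a => (forall_pbr2_eq_zero_iff a).trans (dpDx_eq_zero_and_dpDy_eq_zero_iff a)

/-- The center of the Poisson Lie algebra `P` on `O₂(2,1)` (characteristic 5) is the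
one-dimensional span of the unit element `1`. -/
theorem poisson_center_eq_span_one {K : Type*} [Field K] [CharP K 5] :
    ∀ a : Fin 25 × Fin 5 → K,
      (∀ b : Fin 25 × Fin 5 → K, pbr2 a b = 0) ↔ ∃ c : K, a = c • (dpOne2 : Fin 25 × Fin 5 → K) :=
  poisson_center_eq_span_one_general
end
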